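/- Let R be a Noetherian commutative ring and J ⊆ I ideals of R such that: (i) the ideal I/J of R/J has relation type at most ℓ, and (ii) J ∩ I^t = J·I^{t−1} for every t ≤ ℓ. Then J ∩ I^t = J·I^{t−1} for every t ≥ 1; equivalently, the surjection 𝒜_{R↠R/J}(I/J) ↠ Rees_{R/J}(I/J) is an isomorphism. -/

import Mathlib

/-!
Let `f` generate `I` and write `x ∈ J ∩ I^t` as `F(f)` for a form `F` of degree `t`.
Modulo `J`, `F` becomes a relation of `I/J`, hence a combination of relations of degree
`d ≤ ℓ`. Lift each to a form `G` of degree `d`; then `G(f) ∈ J ∩ I^d = J·I^(d-1)`, and the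
lifting errors have coefficients in `J`. So `F` maps into the ideal of `Rees_R(I)` generated
by `J` and `J·u`, whose degree `t` part is `J·I^(t-1)`.
-/

open Polynomial

/-- The presentation `A[T₁,…,Tₙ] → Rees_A(I)`, `Tᵢ ↦ fᵢ·u`, attached to a family of
elements of `I`. -/
noncomputable def reesPres {A : Type*} [CommRing A] (I : Ideal A) {n : ℕ}
    (f : Fin n → A) (hf : ∀ i, f i ∈ I) :
    MvPolynomial (Fin n) A →ₐ[A] reesAlgebra I :=
  MvPolynomial.aeval fun i =>
    (⟨Polynomial.C (f i) * Polynomial.X, by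
      rw [Polynomial.C_mul_X_eq_monomial]
      exact reesAlgebra.monomial_mem.mpr (by simpa using hf i)⟩ : reesAlgebra I)

/-- An ideal `I` of `A` has relation type at most `ℓ` if, for every (equivalently, some)
finite generating family of `I`, the kernel of the presentation `A[T] ↠ Rees_A(I)` is
generated by its homogeneous elements of degrees `≤ ℓ`. -/
def HasRelationTypeLE (A : Type*) [CommRing A] (I : Ideal A) (ℓ : ℕ) : Prop :=
  ∀ (n : ℕ) (f : Fin n → A) (hf : ∀ i, f i ∈ I),
    Ideal.span (Set.range f) = I →
    RingHom.ker (reesPres I f hf : MvPolynomial (Fin n) A →+* reesAlgebra I) =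
      Ideal.span {F : MvPolynomial (Fin n) A |
        F ∈ RingHom.ker (reesPres I f hf : MvPolynomial (Fin n) A →+* reesAlgebra I) ∧
        ∃ d ≤ ℓ, F.IsHomogeneous d}

namespace MvPolynomial

variable {σ R : Type*} [CommRing R]

theorem IsHomogeneous.aeval_algebraMap_mul {A : Type*} [CommRing A] [Algebra R A]
    {F : MvPolynomial σ R} {d : ℕ} (hF : F.IsHomogeneous d) (g : σ → R) (y : A) :
    MvPolynomial.aeval (fun i => algebraMap R A (g i) * y) F =
      algebraMap R A (eval g F) * y ^ d := by
  conv_lhs => rw [F.as_sum]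
  rw [map_sum, eval_eq, map_sum, Finset.sum_mul]
  refine Finset.sum_congr rfl fun m hm => ?_
  have hdeg : ∑ i ∈ m.support, m i = d := by
    simpa [Finsupp.weight_apply, Finsupp.sum] using hF (mem_support_iff.mp hm)
  simp only [aeval_monomial, Finsupp.prod, mul_pow, Finset.prod_mul_distrib,
    Finset.prod_pow_eq_pow_sum, hdeg, map_mul, map_prod, map_pow]
  ring

theorem map_homogeneousComponent {S : Type*} [CommRing S] (φ : R →+* S) (n : ℕ)
    (F : MvPolynomial σ R) :
    map φ (homogeneousComponent n F) = homogeneousComponent n (map φ F) := by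
  ext m
  simp only [coeff_map, coeff_homogeneousComponent]
  split_ifs <;> simp

theorem exists_isHomogeneous_map_eq {S : Type*} [CommRing S] {φ : R →+* S}
    (hφ : Function.Surjective φ) {g : MvPolynomial σ S} {d : ℕ} (hg : g.IsHomogeneous d) :
    ∃ G : MvPolynomial σ R, G.IsHomogeneous d ∧ map φ G = g := by
  obtain ⟨G, rfl⟩ := map_surjective φ hφ g
  exact ⟨homogeneousComponent d G, homogeneousComponent_isHomogeneous d G,
    by rw [map_homogeneousComponent, homogeneousComponent_eq_self hg]⟩

theorem eval_map_comp {S : Type*} [CommRing S] (φ : R →+* S) (f : σ → R)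
    (F : MvPolynomial σ R) : eval (φ ∘ f) (map φ F) = φ (eval f F) := by
  rw [eval_map, eval, coe_eval₂Hom, eval₂_comp_left, RingHom.comp_id]

theorem exists_isHomogeneous_eval_eq_of_mem_span_pow (f : σ → R) {t : ℕ} {x : R}
    (hx : x ∈ Ideal.span (Set.range f) ^ t) :
    ∃ F : MvPolynomial σ R, F.IsHomogeneous t ∧ eval f F = x := by
  induction t generalizing x with
  | zero => exact ⟨C x, isHomogeneous_C σ x, eval_C x⟩
  | succ t ih =>
    rw [pow_succ] at hx
    refine Submodule.mul_induction_on hx (fun a ha b hb => ?_) ?_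
    · obtain ⟨F, hF, rfl⟩ := ih ha
      obtain ⟨c, rfl⟩ := Finsupp.mem_span_range_iff_exists_finsupp.mp hb
      refine ⟨F * c.sum fun i r => C r * X i, hF.mul ?_, ?_⟩
      · exact IsHomogeneous.sum _ _ _ fun i _ => isHomogeneous_C_mul_X _ _
      · simp [Finsupp.sum, map_sum, smul_eq_mul]
    · rintro _ _ ⟨F, hF, rfl⟩ ⟨G, hG, rfl⟩
      exact ⟨F + G, hF.add hG, map_add _ _ _⟩

end MvPolynomial

section Rees

variable {R : Type*} [CommRing R] {I : Ideal R} {n : ℕ} {f : Fin n → R}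

theorem coe_reesPres_of_isHomogeneous (hf : ∀ i, f i ∈ I)
    {F : MvPolynomial (Fin n) R} {d : ℕ} (hF : F.IsHomogeneous d) :
    (reesPres I f hf F : R[X]) = C (MvPolynomial.eval f F) * X ^ d := by
  change (reesAlgebra I).val (MvPolynomial.aeval _ F) = _
  rw [MvPolynomial.comp_aeval_apply]
  exact hF.aeval_algebraMap_mul f X

theorem eval_mem_pow_of_isHomogeneous (hf : ∀ i, f i ∈ I) {F : MvPolynomial (Fin n) R}
    {d : ℕ} (hF : F.IsHomogeneous d) : MvPolynomial.eval f F ∈ I ^ d := by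
  have := (mem_reesAlgebra_iff I _).mp (reesPres I f hf F).2 d
  rwa [coe_reesPres_of_isHomogeneous hf hF, coeff_C_mul_X_pow, if_pos rfl] at this

theorem mem_ker_reesPres_iff_of_isHomogeneous (hf : ∀ i, f i ∈ I)
    {F : MvPolynomial (Fin n) R} {d : ℕ} (hF : F.IsHomogeneous d) :
    F ∈ RingHom.ker (reesPres I f hf : MvPolynomial (Fin n) R →+* reesAlgebra I) ↔
      MvPolynomial.eval f F = 0 := by
  rw [RingHom.mem_ker, ← monomial_eq_zero_iff (MvPolynomial.eval f F) d,
    ← C_mul_X_pow_eq_monomial, ← coe_reesPres_of_isHomogeneous hf hF]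
  exact ZeroMemClass.coe_eq_zero.symm

variable (I) in
/-- The kernel of `Rees_R(I) ↠ 𝒜_{R↠R/J}(I/J)`: its degree `k` part is `J·I^(k-1)`,
which for `k = 0` is `J` by truncated subtraction. -/
def aluffiIdeal (J : Ideal R) : Ideal (reesAlgebra I) where
  carrier := {p | ∀ k, (p : R[X]).coeff k ∈ J * I ^ (k - 1)}
  zero_mem' k := by simp
  add_mem' hp hq k := by simpa using Ideal.add_mem _ (hp k) (hq k)
  smul_mem' q p hp k := by
    rw [smul_eq_mul, Subalgebra.coe_mul, coeff_mul]
    refine Ideal.sum_mem _ fun ⟨a, b⟩ hab => ?_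
    rw [Finset.HasAntidiagonal.mem_antidiagonal] at hab
    have hq : (q : R[X]).coeff a ∈ I ^ a := (mem_reesAlgebra_iff I _).mp q.2 a
    have hdeg : I ^ a * (J * I ^ (b - 1)) ≤ J * I ^ (k - 1) := by
      rw [mul_left_comm, ← pow_add]
      exact Ideal.mul_mono_right (Ideal.pow_le_pow_right (by omega))
    exact hdeg (Ideal.mul_mem_mul hq (hp b))

theorem reesPres_mem_aluffiIdeal_iff_of_isHomogeneous (J : Ideal R) (hf : ∀ i, f i ∈ I)
    {F : MvPolynomial (Fin n) R} {d : ℕ} (hF : F.IsHomogeneous d) :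
    reesPres I f hf F ∈ aluffiIdeal I J ↔ MvPolynomial.eval f F ∈ J * I ^ (d - 1) := by
  change (∀ k, _) ↔ _
  simp only [coe_reesPres_of_isHomogeneous hf hF, coeff_C_mul_X_pow]
  refine ⟨fun h => by simpa using h d, fun h k => ?_⟩
  split_ifs with hk
  · exact hk ▸ h
  · exact zero_mem _

theorem ker_map_le_comap_aluffiIdeal (J : Ideal R) (hf : ∀ i, f i ∈ I) :
    RingHom.ker (MvPolynomial.map (σ := Fin n) (Ideal.Quotient.mk J)) ≤
      (aluffiIdeal I J).comap (reesPres I f hf) := by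
  rw [MvPolynomial.ker_map, Ideal.mk_ker, Ideal.map_le_iff_le_comap]
  intro j hj
  have hC := MvPolynomial.isHomogeneous_C (Fin n) j
  exact (reesPres_mem_aluffiIdeal_iff_of_isHomogeneous J hf hC).mpr (by simpa using hj)

theorem mem_map_comap_aluffiIdeal_of_eval_eq_zero {J : Ideal R} (hf : ∀ i, f i ∈ I)
    {g : MvPolynomial (Fin n) (R ⧸ J)} {d : ℕ} (hg : g.IsHomogeneous d)
    (hgf : MvPolynomial.eval (Ideal.Quotient.mk J ∘ f) g = 0)
    (hd : J ⊓ I ^ d ≤ J * I ^ (d - 1)) :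
    g ∈ ((aluffiIdeal I J).comap (reesPres I f hf)).map
      (MvPolynomial.map (Ideal.Quotient.mk J)) := by
  obtain ⟨G, hG, rfl⟩ :=
    MvPolynomial.exists_isHomogeneous_map_eq Ideal.Quotient.mk_surjective hg
  rw [MvPolynomial.eval_map_comp, Ideal.Quotient.eq_zero_iff_mem] at hgf
  exact Ideal.mem_map_of_mem _ ((reesPres_mem_aluffiIdeal_iff_of_isHomogeneous J hf hG).mpr
    (hd ⟨hgf, eval_mem_pow_of_isHomogeneous hf hG⟩))

theorem inf_pow_le_mul_pow_pred_of_hasRelationTypeLE {J : Ideal R} (hf : ∀ i, f i ∈ I)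
    (hspan : Ideal.span (Set.range f) = I) {ℓ : ℕ}
    (hrel : HasRelationTypeLE (R ⧸ J) (I.map (Ideal.Quotient.mk J)) ℓ)
    (hlow : ∀ d ≤ ℓ, J ⊓ I ^ d ≤ J * I ^ (d - 1)) (t : ℕ) :
    J ⊓ I ^ t ≤ J * I ^ (t - 1) := by
  set φ := MvPolynomial.map (σ := Fin n) (Ideal.Quotient.mk J)
  set ψ : MvPolynomial (Fin n) (R ⧸ J) →+* reesAlgebra (I.map (Ideal.Quotient.mk J)) :=
    ↑(reesPres _ (Ideal.Quotient.mk J ∘ f) fun i => Ideal.mem_map_of_mem _ (hf i))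
  set N := (aluffiIdeal I J).comap (reesPres I f hf)
  have hspan' :
      Ideal.span (Set.range (Ideal.Quotient.mk J ∘ f)) = I.map (Ideal.Quotient.mk J) := by
    rw [Set.range_comp, ← Ideal.map_span, hspan]
  have hker_le : RingHom.ker ψ ≤ N.map φ := by
    rw [hrel n _ _ hspan', Ideal.span_le]
    rintro g ⟨hg, d, hdℓ, hgd⟩
    exact mem_map_comap_aluffiIdeal_of_eval_eq_zero hf hgd
      ((mem_ker_reesPres_iff_of_isHomogeneous _ hgd).mp hg) (hlow d hdℓ)
  have hcomap : (N.map φ).comap φ = N := by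
    rw [Ideal.comap_map_of_surjective φ
      (MvPolynomial.map_surjective _ Ideal.Quotient.mk_surjective)]
    exact sup_eq_left.mpr (ker_map_le_comap_aluffiIdeal J hf)
  rintro x ⟨hxJ, hxI⟩
  obtain ⟨F, hF, rfl⟩ :=
    MvPolynomial.exists_isHomogeneous_eval_eq_of_mem_span_pow f (hspan ▸ hxI)
  have hFker : φ F ∈ RingHom.ker ψ := by
    rw [mem_ker_reesPres_iff_of_isHomogeneous _ (hF.map _), MvPolynomial.eval_map_comp]
    exact Ideal.Quotient.eq_zero_iff_mem.mpr hxJ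
  have hFN : F ∈ N := hcomap ▸ hker_le hFker
  exact (reesPres_mem_aluffiIdeal_iff_of_isHomogeneous J hf hF).mp hFN

end Rees

/-- let `J ⊆ I` be ideals of a Noetherian ring `R` such that `I/J` has
relation type at most `ℓ` over `R/J` and `J ∩ I^t = J·I^{t−1}` for every `1 ≤ t ≤ ℓ`.
Then `J ∩ I^t = J·I^{t−1}` for every `t ≥ 1`; that is, the surjection
`𝒜_{R↠R/J}(I/J) ↠ Rees_{R/J}(I/J)` is an isomorphism. -/
theorem aluffi_to_rees_iso_of_relation_type {R : Type*} [CommRing R] [IsNoetherianRing R]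
    (I J : Ideal R) (hJI : J ≤ I) (ℓ : ℕ)
    (hrel : HasRelationTypeLE (R ⧸ J) (I.map (Ideal.Quotient.mk J)) ℓ)
    (hlow : ∀ t : ℕ, 1 ≤ t → t ≤ ℓ → J ⊓ I ^ t = J * I ^ (t - 1)) :
    ∀ t : ℕ, 1 ≤ t → J ⊓ I ^ t = J * I ^ (t - 1) := by
  intro t ht
  obtain ⟨n, f, hspan⟩ :=
    Submodule.fg_iff_exists_fin_generating_family.mp (IsNoetherian.noetherian I)
  have hf : ∀ i, f i ∈ I := fun i => hspan ▸ Ideal.subset_span ⟨i, rfl⟩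
  have hlow' : ∀ d ≤ ℓ, J ⊓ I ^ d ≤ J * I ^ (d - 1) := by
    rintro (_ | d) hd
    · simp
    · exact (hlow _ d.succ_pos hd).le
  refine le_antisymm (inf_pow_le_mul_pow_pred_of_hasRelationTypeLE hf hspan hrel hlow' t)
    (le_inf Ideal.mul_le_left ?_)
  calc J * I ^ (t - 1) ≤ I * I ^ (t - 1) := Ideal.mul_mono_left hJI
    _ = I ^ t := by rw [← pow_succ', Nat.sub_add_cancel ht]
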